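/- arXiv:1805.04073 — 4 statements merged into one kernel-verified Lean document; each statement's English description precedes it below -/
import Mathlib

section
/- Let F be a field and let Γ₁ : A = ⊕_{g∈G} A^(g) and Γ₂ : B = ⊕_{h∈H} B^(h) be group gradings on associative F-algebras such that supp Γ₁ contains at least two distinct elements and B ≠ 0. Then the product of A and B exists neither in GrAlg_F nor in GrAlg¹_F (in the latter case A and B are assumed unital). -/
/-!
Let `π, ρ` exhibit `P` as a product of `A` and `B`. Testing the universal property against the free
(unital) algebra on one generator, graded by the free group on it, shows that every pair of
homogeneous elements `(x, y)` has a homogeneous lift to `P`, and that homogeneous elements of `P`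
are determined by their images under `π` and `ρ`.

Take nonzero `a ∈ A_g`, `a' ∈ A_t` and a nonzero homogeneous `b ∈ B`, with homogeneous lifts
`p, p'` of `(a, b)`, `(a', b)`. If `b * c ≠ 0` for a homogeneous `c` (`c = 1` in the unital case,
`c = b` if `b² ≠ 0`), let `q` lift `(0, c)`: then `p * q` and `p' * q` are nonzero homogeneous lifts
of `(0, b * c)`, hence equal, so `p` and `p'` have the same degree; since `π` maps that component
into a single one, `g = t`. If `b² = 0`, testing against `A × F b` with `F b` placed in degree `g`
gives a lift of `(0, b)` in the degree of a lift of `a`; as this lift is unique, lifts of `a` and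
of `a'` again share a component.
-/

set_option autoImplicit false

universe u

/-- A group grading on a (not necessarily unital) associative algebra over `F`:
an object of the category `GrAlg_F`. -/
structure GrAlg (F : Type u) [Field F] : Type (u + 1) where
  A : Type u
  [ringA : NonUnitalRing A]
  [modA : Module F A]
  [sccA : SMulCommClass F A A]
  [istA : IsScalarTower F A A]
  G : Type u
  [grpG : Group G]
  comp : G → Submodule F A
  mul_mem : ∀ ⦃g h : G⦄ ⦃a b : A⦄, a ∈ comp g → b ∈ comp h → a * b ∈ comp (g * h)
  independent : iSupIndep comp
  spans : (⨆ g, comp g) = ⊤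

attribute [instance] GrAlg.ringA GrAlg.modA GrAlg.sccA GrAlg.istA GrAlg.grpG

variable {F : Type u} [Field F]

/-- The grading is trivial if all components other than the identity component vanish. -/
def GrAlg.IsTrivialGrading (X : GrAlg F) : Prop := ∀ g : X.G, g ≠ 1 → X.comp g = ⊥

/-- The support of a grading. -/
def GrAlg.supp (X : GrAlg F) : Set X.G := {g | X.comp g ≠ ⊥}

/-- A morphism in `GrAlg_F`: an algebra homomorphism mapping each graded component
into some graded component. -/
@[ext]
structure GrAlgHom (X Y : GrAlg F) where
  hom : X.A →ₙₐ[F] Y.A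
  graded : ∀ g : X.G, ∃ h : Y.G, ∀ a ∈ X.comp g, hom a ∈ Y.comp h

def GrAlgHom.id (X : GrAlg F) : GrAlgHom X X where
  hom := NonUnitalAlgHom.id F X.A
  graded g := ⟨g, fun a ha => ha⟩

def GrAlgHom.comp {X Y Z : GrAlg F} (g : GrAlgHom Y Z) (f : GrAlgHom X Y) :
    GrAlgHom X Z where
  hom := g.hom.comp f.hom
  graded s := by
    obtain ⟨h, hh⟩ := f.graded s
    obtain ⟨k, hk⟩ := g.graded h
    exact ⟨k, fun a ha => by simpa using hk _ (hh a ha)⟩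

/-- An object of `GrAlg¹_F`: a group grading on a unital associative algebra. -/
structure GrAlgOne (F : Type u) [Field F] extends GrAlg F : Type (u + 1) where
  one : A
  one_mul : ∀ a : A, one * a = a
  mul_one : ∀ a : A, a * one = a

/-- A morphism in `GrAlg¹_F`: a unital graded algebra homomorphism. -/
@[ext]
structure GrAlgOneHom (X Y : GrAlgOne F) extends GrAlgHom X.toGrAlg Y.toGrAlg where
  map_one : toGrAlgHom.hom X.one = Y.one

def GrAlgOneHom.id (X : GrAlgOne F) : GrAlgOneHom X X where
  toGrAlgHom := GrAlgHom.id X.toGrAlg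
  map_one := rfl

def GrAlgOneHom.comp {X Y Z : GrAlgOne F} (g : GrAlgOneHom Y Z) (f : GrAlgOneHom X Y) :
    GrAlgOneHom X Z where
  toGrAlgHom := g.toGrAlgHom.comp f.toGrAlgHom
  map_one := by
    show (g.toGrAlgHom.hom.comp f.toGrAlgHom.hom) X.one = Z.one
    simp [f.map_one, g.map_one]

/-- A morphism in `tilde{GrAlg_F}`: a graded injective homomorphism. -/
@[ext]
structure TGrAlgHom (X Y : GrAlg F) extends GrAlgHom X Y where
  injOn : ∀ g : X.G, Set.InjOn toGrAlgHom.hom (X.comp g)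

def TGrAlgHom.id (X : GrAlg F) : TGrAlgHom X X where
  toGrAlgHom := GrAlgHom.id X
  injOn g := fun a _ b _ hab => hab

def TGrAlgHom.comp {X Y Z : GrAlg F} (g : TGrAlgHom Y Z) (f : TGrAlgHom X Y) :
    TGrAlgHom X Z where
  toGrAlgHom := g.toGrAlgHom.comp f.toGrAlgHom
  injOn s := by
    intro a ha b hb hab
    obtain ⟨h, hh⟩ := f.graded s
    exact f.injOn s ha hb (g.injOn h (hh a ha) (hh b hb) hab)

/-- A morphism in `tilde{GrAlg¹_F}`: a unital graded injective homomorphism. -/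
@[ext]
structure TGrAlgOneHom (X Y : GrAlgOne F) extends TGrAlgHom X.toGrAlg Y.toGrAlg where
  map_one : toGrAlgHom.hom X.one = Y.one

def TGrAlgOneHom.id (X : GrAlgOne F) : TGrAlgOneHom X X where
  toTGrAlgHom := TGrAlgHom.id X.toGrAlg
  map_one := rfl

def TGrAlgOneHom.comp {X Y Z : GrAlgOne F} (g : TGrAlgOneHom Y Z) (f : TGrAlgOneHom X Y) :
    TGrAlgOneHom X Z where
  toTGrAlgHom := g.toTGrAlgHom.comp f.toTGrAlgHom
  map_one := by
    show (g.toGrAlgHom.hom.comp f.toGrAlgHom.hom) X.one = Z.one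
    simp [f.map_one, g.map_one]
section Statement

variable (F)

/-- `P` together with `π, ρ` is a product of `A` and `B` in `GrAlg_F`. -/
def IsProductGrAlg {A B P : GrAlg F} (π : GrAlgHom P A) (ρ : GrAlgHom P B) : Prop :=
  ∀ (D : GrAlg F) (α : GrAlgHom D A) (β : GrAlgHom D B),
    ∃! ψ : GrAlgHom D P, π.comp ψ = α ∧ ρ.comp ψ = β

/-- `P` together with `π, ρ` is a product of `A` and `B` in `GrAlg¹_F`. -/
def IsProductGrAlgOne {A B P : GrAlgOne F} (π : GrAlgOneHom P A) (ρ : GrAlgOneHom P B) : Prop :=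
  ∀ (D : GrAlgOne F) (α : GrAlgOneHom D A) (β : GrAlgOneHom D B),
    ∃! ψ : GrAlgOneHom D P, π.comp ψ = α ∧ ρ.comp ψ = β

end Statement

namespace GrAlg

variable (X : GrAlg F)

theorem eq_of_mem_comp_s2 {g h : X.G} {a : X.A} (ha : a ≠ 0) (hg : a ∈ X.comp g)
    (hh : a ∈ X.comp h) : g = h := by
  by_contra hne
  exact ha (Submodule.disjoint_def.mp (X.independent.pairwiseDisjoint hne) a hg hh)

@[elab_as_elim]
theorem induction_on {motive : X.A → Prop} (a : X.A) (zero : motive 0)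
    (add : ∀ a b, motive a → motive b → motive (a + b))
    (mem : ∀ g, ∀ a ∈ X.comp g, motive a) : motive a :=
  Submodule.iSup_induction X.comp (motive := motive) (X.spans ▸ Submodule.mem_top) mem zero add

theorem exists_mem_comp_ne_zero {a : X.A} (ha : a ≠ 0) : ∃ g, ∃ b ∈ X.comp g, b ≠ 0 := by
  by_contra! h
  exact ha (X.induction_on a rfl (fun a b ha hb => by rw [ha, hb, add_zero]) h)

end GrAlg

theorem GrAlgHom.eq_of_mem_comp_s2 {X Y : GrAlg F} (f : GrAlgHom X Y) {w : X.G} {p p' : X.A}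
    (hp : p ∈ X.comp w) (hp' : p' ∈ X.comp w) {g t : Y.G} (hg : f.hom p ∈ Y.comp g)
    (ht : f.hom p' ∈ Y.comp t) (h0 : f.hom p ≠ 0) (h0' : f.hom p' ≠ 0) : g = t := by
  obtain ⟨e, he⟩ := f.graded w
  exact (Y.eq_of_mem_comp_s2 h0 hg (he p hp)).trans (Y.eq_of_mem_comp_s2 h0' (he p' hp') ht)

/- Write `1 = e + r` with `e` of degree `1` and `r` in the other components. For homogeneous `a`,
`a * r = a - a * e` lies both in the component of `a` and in the others, so it vanishes; hence
`r = 1 * r = 0`. -/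
theorem GrAlgOne.one_mem (X : GrAlgOne F) : X.one ∈ X.comp 1 := by
  obtain ⟨e, he, r, hr, hone⟩ : ∃ e ∈ X.comp 1, ∃ r ∈ ⨆ (g) (_ : g ≠ 1), X.comp g, e + r = X.one :=
    Submodule.mem_sup.mp (by rw [← iSup_split_single, X.spans]; trivial)
  have hmul : ∀ g, ∀ a ∈ X.comp g, a * r = 0 := by
    intro g a ha
    have hleft : a * r ∈ ⨆ (k) (_ : k ≠ g), X.comp k := by
      refine (iSup₂_le fun k hk => ?_ : ⨆ (k) (_ : k ≠ 1), X.comp k ≤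
        (⨆ (k) (_ : k ≠ g), X.comp k).comap (LinearMap.mulLeft F a)) hr
      intro b hb
      exact Submodule.mem_iSup_of_mem (g * k) <| Submodule.mem_iSup_of_mem (by simpa using hk) <|
        X.mul_mem ha hb
    have hcomp : a * r ∈ X.comp g := by
      rw [eq_sub_of_add_eq' (by rw [← mul_add, hone, X.mul_one] : a * e + a * r = a)]
      exact sub_mem ha (_root_.mul_one g ▸ X.mul_mem ha he)
    exact Submodule.disjoint_def.mp (X.independent g) _ hcomp hleft
  have : r = 0 := by
    rw [← X.one_mul r]
    exact X.induction_on X.one (zero_mul r)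
      (fun a b ha hb => by rw [add_mul, ha, hb, add_zero]) hmul
  rwa [← hone, this, add_zero]

section MonoidAlgebraGrading

open MonoidAlgebra

theorem MonoidAlgebra.single_mem_supported {R M : Type*} [Semiring R] {m : M} {s : Set M}
    (hm : m ∈ s) (r : R) : single m r ∈ supported R R s := by
  rw [mem_supported, coeff_single]
  exact fun x hx => (Finset.mem_singleton.mp (Finsupp.support_single_subset hx)) ▸ hm

theorem MonoidAlgebra.liftMagma_single {M A : Type*} [Mul M] [NonUnitalRing A] [Module F A]
    [IsScalarTower F A A] [SMulCommClass F A A] (σ : M →ₙ* A) (m : M) :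
    liftMagma F σ (single m 1) = σ m :=
  congrArg (· m) ((liftMagma F).symm_apply_apply σ)

theorem MonoidAlgebra.liftMagma_mem_of_mem_supported {M A : Type*} [Mul M] [NonUnitalRing A]
    [Module F A] [IsScalarTower F A A] [SMulCommClass F A A] {σ : M →ₙ* A} {s : Set M}
    {p : Submodule F A} (hσ : ∀ m ∈ s, σ m ∈ p) {a : MonoidAlgebra F M}
    (ha : a ∈ supported F F s) : liftMagma F σ a ∈ p := by
  rw [supported_eq_span_single] at ha
  induction ha using Submodule.span_induction with
  | mem x hx =>
    obtain ⟨m, hm, rfl⟩ := hx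
    simpa [liftMagma_single] using hσ m hm
  | zero => simp
  | add x y _ _ hx hy => simpa using add_mem hx hy
  | smul c x _ hx => simpa using Submodule.smul_mem _ c hx

variable {M G : Type u} [Semigroup M] [Group G]

variable (F) in
noncomputable abbrev GrAlg.ofMonoidAlgebra (φ : M →ₙ* G) : GrAlg F where
  A := MonoidAlgebra F M
  G := G
  comp γ := supported F F (φ ⁻¹' {γ})
  mul_mem g h a b ha hb m hm := by
    classical
    obtain ⟨m₁, hm₁, m₂, hm₂, rfl⟩ := Finset.mem_mul.mp (support_coeff_mul_subset a b hm)
    rw [Set.mem_preimage, map_mul, Set.mem_singleton_iff.mp (ha hm₁),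
      Set.mem_singleton_iff.mp (hb hm₂)]
    rfl
  independent γ := by
    refine Submodule.disjoint_def.mpr fun a ha hsup => ?_
    have hle : ⨆ (δ) (_ : δ ≠ γ), supported F F (φ ⁻¹' {δ}) ≤ supported F F (φ ⁻¹' {γ}ᶜ) :=
      iSup₂_le fun δ hδ => supported_mono fun m hm => by simp_all
    rw [← coeff_eq_zero, ← Finsupp.support_eq_empty, ← Finset.coe_eq_empty,
      ← Set.subset_empty_iff, ← Set.inter_compl_self (φ ⁻¹' {γ})]
    exact Set.subset_inter ha (hle hsup)
  spans := by
    refine eq_top_iff.mpr fun a _ => induction_linear a (Submodule.zero_mem _)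
      (fun _ _ => Submodule.add_mem _) fun m r => ?_
    exact Submodule.mem_iSup_of_mem (φ m) (single_mem_supported (s := φ ⁻¹' {φ m}) rfl r)

noncomputable def GrAlgHom.ofMonoidAlgebra {φ : M →ₙ* G} {X : GrAlg F} (σ : M →ₙ* X.A)
    (θ : G → X.G) (hσ : ∀ m, σ m ∈ X.comp (θ (φ m))) :
    GrAlgHom (GrAlg.ofMonoidAlgebra F φ) X where
  hom := liftMagma F σ
  graded γ := ⟨θ γ, fun _ => liftMagma_mem_of_mem_supported fun m hm => hm ▸ hσ m⟩

end MonoidAlgebraGrading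

section Free

open MonoidAlgebra

variable (F) in
noncomputable abbrev GrAlg.free : GrAlg F :=
  GrAlg.ofMonoidAlgebra F (FreeSemigroup.lift fun _ : PUnit.{u + 1} => FreeGroup.of PUnit.unit)

variable (F) in
noncomputable def GrAlg.freeGen : (GrAlg.free F).A :=
  single (FreeSemigroup.of PUnit.unit) 1

theorem GrAlg.freeGen_mem : freeGen F ∈ (free F).comp (FreeGroup.of PUnit.unit) :=
  single_mem_supported (by rfl) 1

noncomputable def GrAlg.freeLift (X : GrAlg F) {g : X.G} {x : X.A} (hx : x ∈ X.comp g) :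
    GrAlgHom (GrAlg.free F) X :=
  GrAlgHom.ofMonoidAlgebra (FreeSemigroup.lift fun _ => x) (FreeGroup.lift fun _ => g)
    fun w => FreeSemigroup.recOnMul w (fun _ => by simpa using hx)
      fun _ _ _ hw => by simpa using X.mul_mem hx hw

theorem GrAlg.freeLift_freeGen (X : GrAlg F) {g : X.G} {x : X.A} (hx : x ∈ X.comp g) :
    (X.freeLift hx).hom (freeGen F) = x :=
  liftMagma_single _ _

theorem GrAlg.free_hom_ext {X : GrAlg F} {f₁ f₂ : GrAlgHom (GrAlg.free F) X}
    (h : f₁.hom (freeGen F) = f₂.hom (freeGen F)) : f₁ = f₂ :=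
  GrAlgHom.ext (nonUnitalAlgHom_ext' F (FreeSemigroup.hom_ext (funext fun _ => h)))

abbrev GrAlgOne.toMonoid (X : GrAlgOne F) : Monoid X.A where
  mul := (· * ·)
  mul_assoc := mul_assoc
  one := X.one
  one_mul := X.one_mul
  mul_one := X.mul_one

variable (F) in
noncomputable abbrev GrAlgOne.free : GrAlgOne F where
  toGrAlg := GrAlg.ofMonoidAlgebra F
    (FreeMonoid.lift fun _ : PUnit.{u + 1} => FreeGroup.of PUnit.unit).toMulHom
  one := 1
  one_mul := _root_.one_mul
  mul_one := _root_.mul_one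

variable (F) in
noncomputable def GrAlgOne.freeGen : (GrAlgOne.free F).A :=
  single (FreeMonoid.of PUnit.unit) 1

theorem GrAlgOne.freeGen_mem : freeGen F ∈ (free F).comp (FreeGroup.of PUnit.unit) :=
  single_mem_supported (by rfl) 1

noncomputable def GrAlgOne.freeLift (X : GrAlgOne F) {g : X.G} {x : X.A} (hx : x ∈ X.comp g) :
    GrAlgOneHom (GrAlgOne.free F) X :=
  letI := X.toMonoid
  { toGrAlgHom := GrAlgHom.ofMonoidAlgebra (FreeMonoid.lift fun _ => x).toMulHom
      (FreeGroup.lift fun _ => g) fun w => FreeMonoid.inductionOn' w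
        (by simp only [map_one]; exact X.one_mem)
        fun _ _ hw => by simpa using X.mul_mem hx hw
    map_one := liftMagma_single _ _ }

theorem GrAlgOne.freeLift_freeGen (X : GrAlgOne F) {g : X.G} {x : X.A} (hx : x ∈ X.comp g) :
    (X.freeLift hx).hom (freeGen F) = x :=
  liftMagma_single _ _

theorem GrAlgOne.free_hom_ext {X : GrAlgOne F} {f₁ f₂ : GrAlgOneHom (GrAlgOne.free F) X}
    (h : f₁.hom (freeGen F) = f₂.hom (freeGen F)) : f₁ = f₂ := by
  refine GrAlgOneHom.ext (nonUnitalAlgHom_ext F fun w => ?_)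
  induction w using FreeMonoid.inductionOn' with
  | one => exact f₁.map_one.trans f₂.map_one.symm
  | of_mul a w hw =>
    rw [← _root_.mul_one (1 : F), ← single_mul_single, map_mul, map_mul, hw]
    exact congrArg (· * _) h

end Free

section Lifts

variable {A B P : GrAlg F}

structure HasUniqueHomogeneousLifts (π : GrAlgHom P A) (ρ : GrAlgHom P B) : Prop where
  exists_lift {g : A.G} {h : B.G} {x : A.A} {y : B.A} :
    x ∈ A.comp g → y ∈ B.comp h → ∃ w, ∃ p ∈ P.comp w, π.hom p = x ∧ ρ.hom p = y
  eq_of_homogeneous {w₁ w₂ : P.G} {p₁ p₂ : P.A} :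
    p₁ ∈ P.comp w₁ → p₂ ∈ P.comp w₂ → π.hom p₁ = π.hom p₂ → ρ.hom p₁ = ρ.hom p₂ → p₁ = p₂

theorem HasUniqueHomogeneousLifts.eq_of_mul_ne_zero {π : GrAlgHom P A} {ρ : GrAlgHom P B}
    (hL : HasUniqueHomogeneousLifts π ρ) {g t : A.G} {a a' : A.A} (ha : a ∈ A.comp g)
    (ha' : a' ∈ A.comp t) (ha0 : a ≠ 0) (ha0' : a' ≠ 0) {h k : B.G} {b c : B.A}
    (hb : b ∈ B.comp h) (hc : c ∈ B.comp k) (hbc : b * c ≠ 0) : g = t := by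
  obtain ⟨u, p, hp, hπp, hρp⟩ := hL.exists_lift ha hb
  obtain ⟨u', p', hp', hπp', hρp'⟩ := hL.exists_lift ha' hb
  obtain ⟨v, q, hq, hπq, hρq⟩ := hL.exists_lift (zero_mem (A.comp 1)) hc
  have hpq : p * q = p' * q := hL.eq_of_homogeneous (P.mul_mem hp hq) (P.mul_mem hp' hq)
    (by simp [hπq]) (by simp [hρp, hρp'])
  have hpq0 : p * q ≠ 0 := fun h0 => hbc (by rw [← hρp, ← hρq, ← map_mul, h0, map_zero])
  have hu : u = u' :=
    mul_right_cancel (P.eq_of_mem_comp_s2 hpq0 (P.mul_mem hp hq) (hpq ▸ P.mul_mem hp' hq))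
  subst hu
  exact π.eq_of_mem_comp_s2 hp hp' (hπp ▸ ha) (hπp' ▸ ha') (hπp ▸ ha0) (hπp' ▸ ha0')

end Lifts

namespace IsProductGrAlg

variable {A B P : GrAlg F} {π : GrAlgHom P A} {ρ : GrAlgHom P B}

theorem hom_ext (hP : IsProductGrAlg F π ρ) {D : GrAlg F} {ψ₁ ψ₂ : GrAlgHom D P}
    (hπ : π.comp ψ₁ = π.comp ψ₂) (hρ : ρ.comp ψ₁ = ρ.comp ψ₂) : ψ₁ = ψ₂ :=
  (hP D _ _).unique ⟨rfl, rfl⟩ ⟨hπ.symm, hρ.symm⟩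

theorem hasUniqueHomogeneousLifts (hP : IsProductGrAlg F π ρ) :
    HasUniqueHomogeneousLifts π ρ where
  exists_lift hx hy := by
    obtain ⟨ψ, ⟨hπ, hρ⟩, -⟩ := hP _ (GrAlg.freeLift _ hx) (GrAlg.freeLift _ hy)
    obtain ⟨w, hw⟩ := ψ.graded _
    refine ⟨w, _, hw _ GrAlg.freeGen_mem, ?_, ?_⟩
    · rw [← GrAlg.freeLift_freeGen _ hx, ← hπ]; rfl
    · rw [← GrAlg.freeLift_freeGen _ hy, ← hρ]; rfl
  eq_of_homogeneous h₁ h₂ hπ hρ := by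
    rw [← P.freeLift_freeGen h₁, ← P.freeLift_freeGen h₂] at hπ hρ ⊢
    rw [hP.hom_ext (ψ₁ := P.freeLift h₁) (ψ₂ := P.freeLift h₂) (GrAlg.free_hom_ext hπ)
      (GrAlg.free_hom_ext hρ)]

end IsProductGrAlg

namespace IsProductGrAlgOne

variable {A B P : GrAlgOne F} {π : GrAlgOneHom P A} {ρ : GrAlgOneHom P B}

theorem hom_ext (hP : IsProductGrAlgOne F π ρ) {D : GrAlgOne F} {ψ₁ ψ₂ : GrAlgOneHom D P}
    (hπ : π.comp ψ₁ = π.comp ψ₂) (hρ : ρ.comp ψ₁ = ρ.comp ψ₂) : ψ₁ = ψ₂ :=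
  (hP D _ _).unique ⟨rfl, rfl⟩ ⟨hπ.symm, hρ.symm⟩

theorem hasUniqueHomogeneousLifts (hP : IsProductGrAlgOne F π ρ) :
    HasUniqueHomogeneousLifts π.toGrAlgHom ρ.toGrAlgHom where
  exists_lift hx hy := by
    obtain ⟨ψ, ⟨hπ, hρ⟩, -⟩ := hP _ (GrAlgOne.freeLift _ hx) (GrAlgOne.freeLift _ hy)
    obtain ⟨w, hw⟩ := ψ.graded _
    refine ⟨w, _, hw _ GrAlgOne.freeGen_mem, ?_, ?_⟩
    · rw [← GrAlgOne.freeLift_freeGen _ hx, ← hπ]; rfl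
    · rw [← GrAlgOne.freeLift_freeGen _ hy, ← hρ]; rfl
  eq_of_homogeneous h₁ h₂ hπ hρ := by
    rw [← P.freeLift_freeGen h₁, ← P.freeLift_freeGen h₂] at hπ hρ ⊢
    rw [hP.hom_ext (ψ₁ := P.freeLift h₁) (ψ₂ := P.freeLift h₂) (GrAlgOne.free_hom_ext hπ)
      (GrAlgOne.free_hom_ext hρ)]

end IsProductGrAlgOne

section SquareZero

variable {R : Type u} [NonUnitalRing R] [Module F R] [SMulCommClass F R R] [IsScalarTower F R R]

theorem mul_eq_zero_of_mem_span_singleton {b x y : R} (hb : b * b = 0)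
    (hx : x ∈ Submodule.span F {b}) (hy : y ∈ Submodule.span F {b}) : x * y = 0 := by
  obtain ⟨r, rfl⟩ := Submodule.mem_span_singleton.mp hx
  obtain ⟨s, rfl⟩ := Submodule.mem_span_singleton.mp hy
  rw [smul_mul_smul_comm, hb, smul_zero]

variable (F) in
def NonUnitalSubalgebra.spanOfMulSelfEqZero (b : R) (hb : b * b = 0) :
    NonUnitalSubalgebra F R :=
  { Submodule.span F {b} with
    mul_mem' := fun hx hy => by
      rw [mul_eq_zero_of_mem_span_singleton hb hx hy]
      exact (Submodule.span F {b}).zero_mem }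

variable (X : GrAlg F) {V : Type u} [NonUnitalRing V] [Module F V] [SMulCommClass F V V]
  [IsScalarTower F V V]

open scoped Classical in
/-- `X × V` graded by `X.G`, with all of `V` in degree `g`: this is a grading because `V` has zero
multiplication. -/
noncomputable def GrAlg.prodAt (hV : ∀ u v : V, u * v = 0) (g : X.G) : GrAlg F where
  A := X.A × V
  G := X.G
  comp γ := (X.comp γ).prod (if γ = g then ⊤ else ⊥)
  mul_mem _ _ _ _ ha hb := ⟨X.mul_mem ha.1 hb.1, by simp [hV]⟩
  independent γ := by
    refine Submodule.disjoint_def.mpr fun z hz hsup => ?_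
    have hle : ⨆ (δ) (_ : δ ≠ γ), (X.comp δ).prod (if δ = g then ⊤ else ⊥) ≤
        (⨆ (δ) (_ : δ ≠ γ), X.comp δ).prod (if γ = g then ⊥ else (⊤ : Submodule F V)) :=
      iSup₂_le fun δ hδ => Submodule.prod_mono
        (le_iSup₂ (f := fun δ (_ : δ ≠ γ) => X.comp δ) δ hδ) (by split_ifs <;> simp_all)
    obtain ⟨h₁, h₂⟩ := hle hsup
    refine Prod.ext (Submodule.disjoint_def.mp (X.independent γ) _ hz.1 h₁) ?_
    have := hz.2
    split_ifs at this h₂ <;> simp_all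
  spans := by
    refine eq_top_iff.mpr fun z _ => ?_
    rw [show z = (z.1, 0) + (0, z.2) by simp]
    refine add_mem ?_ (Submodule.mem_iSup_of_mem g ⟨zero_mem _, by simp⟩)
    refine X.induction_on (motive := fun a => ((a, 0) : X.A × V) ∈ _) z.1 (zero_mem _)
      (fun a b ha hb => by simpa using add_mem ha hb) fun γ a ha => ?_
    exact Submodule.mem_iSup_of_mem γ ⟨ha, zero_mem _⟩

end SquareZero

namespace IsProductGrAlg

variable {A B P : GrAlg F} {π : GrAlgHom P A} {ρ : GrAlgHom P B}

theorem exists_lifts_mem_comp_of_mul_self_eq_zero (hP : IsProductGrAlg F π ρ) {g : A.G}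
    {a : A.A} (ha : a ∈ A.comp g) {h : B.G} {b : B.A} (hb : b ∈ B.comp h) (hbb : b * b = 0) :
    ∃ w, ∃ p ∈ P.comp w, ∃ s ∈ P.comp w, π.hom p = a ∧ π.hom s = 0 ∧ ρ.hom s = b := by
  let S := NonUnitalSubalgebra.spanOfMulSelfEqZero F b hbb
  let D := A.prodAt (V := S)
    (fun u v => Subtype.ext (mul_eq_zero_of_mem_span_singleton hbb u.2 v.2)) g
  let α : GrAlgHom D A := ⟨NonUnitalAlgHom.fst F A.A S, fun γ => ⟨γ, fun _ hz => hz.1⟩⟩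
  let β : GrAlgHom D B := ⟨(NonUnitalSubalgebraClass.subtype S).comp (NonUnitalAlgHom.snd F A.A S),
    fun _ => ⟨h, fun z _ => (Submodule.span_le.mpr (Set.singleton_subset_iff.mpr hb)) z.2.2⟩⟩
  obtain ⟨ψ, ⟨hπ, hρ⟩, -⟩ := hP D α β
  obtain ⟨w, hw⟩ := ψ.graded g
  let b' : S := ⟨b, Submodule.mem_span_singleton_self b⟩
  refine ⟨w, ψ.hom (a, b'), hw _ ⟨ha, by simp⟩, ψ.hom (0, b'), hw _ ⟨zero_mem _, by simp⟩,
    congrArg (fun f => f.hom (a, b')) hπ, congrArg (fun f => f.hom (0, b')) hπ,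
    congrArg (fun f => f.hom (0, b')) hρ⟩

theorem supp_subsingleton (hP : IsProductGrAlg F π ρ) (hB : ∃ b : B.A, b ≠ 0) :
    A.supp.Subsingleton := by
  intro g hg t ht
  obtain ⟨a, ha, ha0⟩ := (Submodule.ne_bot_iff _).mp hg
  obtain ⟨a', ha', ha0'⟩ := (Submodule.ne_bot_iff _).mp ht
  obtain ⟨h, b, hb, hb0⟩ := B.exists_mem_comp_ne_zero hB.choose_spec
  by_cases hbb : b * b = 0
  · obtain ⟨w, p, hp, s, hs, hπp, hπs, hρs⟩ :=
      hP.exists_lifts_mem_comp_of_mul_self_eq_zero ha hb hbb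
    obtain ⟨w', p', hp', s', hs', hπp', hπs', hρs'⟩ :=
      hP.exists_lifts_mem_comp_of_mul_self_eq_zero ha' hb hbb
    have hss : s = s' := hP.hasUniqueHomogeneousLifts.eq_of_homogeneous hs hs'
      (hπs.trans hπs'.symm) (hρs.trans hρs'.symm)
    have hs0 : s ≠ 0 := fun h0 => hb0 (by rw [← hρs, h0, map_zero])
    obtain rfl : w = w' := P.eq_of_mem_comp_s2 hs0 hs (hss ▸ hs')
    exact π.eq_of_mem_comp_s2 hp hp' (hπp ▸ ha) (hπp' ▸ ha') (hπp ▸ ha0) (hπp' ▸ ha0')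
  · exact hP.hasUniqueHomogeneousLifts.eq_of_mul_ne_zero ha ha' ha0 ha0' hb hb hbb

end IsProductGrAlg

theorem IsProductGrAlgOne.supp_subsingleton {A B P : GrAlgOne F} {π : GrAlgOneHom P A}
    {ρ : GrAlgOneHom P B} (hP : IsProductGrAlgOne F π ρ) (hB : ∃ b : B.A, b ≠ 0) :
    A.supp.Subsingleton := by
  intro g hg t ht
  obtain ⟨a, ha, ha0⟩ := (Submodule.ne_bot_iff _).mp hg
  obtain ⟨a', ha', ha0'⟩ := (Submodule.ne_bot_iff _).mp ht
  obtain ⟨h, b, hb, hb0⟩ := B.exists_mem_comp_ne_zero hB.choose_spec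
  exact hP.hasUniqueHomogeneousLifts.eq_of_mul_ne_zero ha ha' ha0 ha0' hb B.one_mem
    (by rwa [B.mul_one])

/-- If the support of the grading on `A` has at least two elements and `B ≠ 0`, then the
product of `A` and `B` exists neither in `GrAlg_F` nor in `GrAlg¹_F`. -/
theorem no_product_of_two_support_elements (F : Type u) [Field F] :
    (∀ A B : GrAlg F,
      (∃ g t : A.G, g ≠ t ∧ g ∈ A.supp ∧ t ∈ A.supp) → (∃ b : B.A, b ≠ 0) →
        ¬ ∃ (P : GrAlg F) (π : GrAlgHom P A) (ρ : GrAlgHom P B), IsProductGrAlg F π ρ)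
    ∧
    (∀ A B : GrAlgOne F,
      (∃ g t : A.G, g ≠ t ∧ g ∈ A.toGrAlg.supp ∧ t ∈ A.toGrAlg.supp) →
        (∃ b : B.A, b ≠ 0) →
        ¬ ∃ (P : GrAlgOne F) (π : GrAlgOneHom P A) (ρ : GrAlgOneHom P B),
            IsProductGrAlgOne F π ρ) :=
  ⟨fun _ _ ⟨_, _, hgt, hg, ht⟩ hB ⟨_, _, _, hP⟩ => hgt (hP.supp_subsingleton hB hg ht),
    fun _ _ ⟨_, _, hgt, hg, ht⟩ hB ⟨_, _, _, hP⟩ => hgt (hP.supp_subsingleton hB hg ht)⟩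
end

section
/- Let G and H be groups and let F be a field. Then the group algebra F(F^× × G × H), with its standard grading by the group F^× × G × H, together with the projections π₁ : F(F^× × G × H) → FG, u_{(α,g,h)} ↦ α·u_g, and π₂ : F(F^× × G × H) → FH, u_{(α,g,h)} ↦ u_h, is the product of FG and FH (each with its standard grading) in both categories tilde{GrAlg_F} and tilde{GrAlg¹_F}. -/
set_option autoImplicit false

universe u

variable {F : Type u} [Field F]

/-! The group algebra `FG` with its standard grading, as an object of our categories. -/

lemma stdComp_eq {F : Type u} [Field F] {G : Type u} [Group G] (g : G) :
    Submodule.span F {(MonoidAlgebra.single g (1 : F) : MonoidAlgebra F G)} =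
      Submodule.span F {MonoidAlgebra.basis G F g} := by
  rw [MonoidAlgebra.basis_apply]

/-- The group algebra `FG` with its standard grading `FG = ⊕_{g ∈ G} F·u_g`. -/
noncomputable def grpAlg (F : Type u) [Field F] (G : Type u) [Group G] : GrAlg F where
  A := MonoidAlgebra F G
  G := G
  comp g := Submodule.span F {MonoidAlgebra.single g 1}
  mul_mem := by
    intro g h a b ha hb
    rw [Submodule.mem_span_singleton] at ha hb ⊢
    obtain ⟨c, rfl⟩ := ha
    obtain ⟨d, rfl⟩ := hb
    refine ⟨c * d, ?_⟩
    rw [smul_mul_assoc, mul_smul_comm, MonoidAlgebra.single_mul_single, one_mul, smul_smul]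
  independent := by
    intro g
    have key := (MonoidAlgebra.basis G F).linearIndependent.iSupIndep_span_singleton g
    simpa only [MonoidAlgebra.basis_apply] using key
  spans := by
    rw [Submodule.iSup_span, ← (MonoidAlgebra.basis G F).span_eq]
    congr 1
    ext x
    simp

/-- The group algebra `FG` with its standard grading, as an object of `GrAlg¹_F`. -/
noncomputable def grpAlgOne (F : Type u) [Field F] (G : Type u) [Group G] : GrAlgOne F :=
  GrAlgOne.mk (grpAlg F G) (1 : MonoidAlgebra F G)
    (fun (a : MonoidAlgebra F G) => one_mul a) (fun (a : MonoidAlgebra F G) => mul_one a)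

/-!
A graded injective map `α : D → FG` sends each homogeneous component `D_d` into a line `F·u_g`,
so it is `a ↦ λ(a)·u_g` for an injective functional `λ` on `D_d`; in particular `dim D_d ≤ 1`.
Given also `β : D → FH`, `a ↦ μ(a)·u_h`, the two functionals on the line `D_d` are proportional,
`λ = r·μ` with `r ∈ F^×`, and `ψ(a) := μ(a)·u_{(r,g,h)}` is forced on `D_d`. Since the two
projections jointly separate homogeneous elements of `F(F^× × G × H)`, multiplicativity of `α`
and `β` transfers to `ψ`. In the unital case nothing more is needed: a graded injective map from
a nonzero unital algebra into a group algebra sends `1` to `1`, because `ψ(1)` fixes the unit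
`ψ(a)` for any nonzero homogeneous `a`.
-/

open MonoidAlgebra

lemma MonoidAlgebra.isUnit_single {R K : Type*} [Semiring R] [Group K] (k : K) {c : R}
    (hc : IsUnit c) : IsUnit (single k c) := by
  obtain ⟨c, rfl⟩ := hc
  exact ⟨⟨single k c, single k⁻¹ ↑c⁻¹, by simp [one_def], by simp [one_def]⟩, rfl⟩

lemma LinearMap.exists_unit_smul_eq_of_injective {K V : Type*} [Field K] [AddCommGroup V]
    [Module K V] {f g : V →ₗ[K] K} (hf : Function.Injective f) (hg : Function.Injective g) :
    ∃ r : Kˣ, f = (r : K) • g := by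
  rcases subsingleton_or_nontrivial V with hV | hV
  · exact ⟨1, LinearMap.ext fun v => by simp [Subsingleton.elim v 0]⟩
  obtain ⟨v₀, hv₀⟩ := exists_ne (0 : V)
  have hf₀ : f v₀ ≠ 0 := fun h => hv₀ (hf (by rw [h, map_zero]))
  have hg₀ : g v₀ ≠ 0 := fun h => hv₀ (hg (by rw [h, map_zero]))
  refine ⟨Units.mk0 (f v₀ / g v₀) (div_ne_zero hf₀ hg₀), LinearMap.ext fun v => ?_⟩
  -- `V` is at most a line, so `v` and `v₀` are proportional with ratio read off by `g`.
  have hv : g v₀ • v = g v • v₀ := hg (by simp [mul_comm])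
  have hfv : g v₀ * f v = g v * f v₀ := by simpa using congrArg f hv
  simp only [LinearMap.smul_apply, Units.val_mk0, smul_eq_mul]
  field_simp
  linear_combination hfv

namespace GrAlg

variable (D : GrAlg F)

lemma linearMap_ext {M : Type*} [AddCommMonoid M] [Module F M] {L L' : D.A →ₗ[F] M}
    (h : ∀ d, ∀ a ∈ D.comp d, L a = L' a) : L = L' := by
  have hle : (⊤ : Submodule F D.A) ≤ LinearMap.eqLocus L L' :=
    D.spans ▸ iSup_le fun d a ha => h d a ha
  exact LinearMap.ext fun x => hle trivial

lemma bijective_coeLinearMap [DecidableEq D.G] :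
    Function.Bijective (DirectSum.coeLinearMap D.comp) :=
  DirectSum.isInternal_submodule_of_iSupIndep_of_iSup_eq_top D.independent D.spans

open scoped Classical in
noncomputable def lift {M : Type*} [AddCommMonoid M] [Module F M]
    (f : ∀ d, D.comp d →ₗ[F] M) : D.A →ₗ[F] M :=
  DirectSum.toModule F D.G M f ∘ₗ
    (LinearEquiv.ofBijective _ D.bijective_coeLinearMap).symm.toLinearMap

open scoped Classical in
lemma lift_apply_of_mem {M : Type*} [AddCommMonoid M] [Module F M]
    (f : ∀ d, D.comp d →ₗ[F] M) {d : D.G} {a : D.A} (ha : a ∈ D.comp d) :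
    D.lift f a = f d ⟨a, ha⟩ := by
  have h : (LinearEquiv.ofBijective _ D.bijective_coeLinearMap).symm a =
      DirectSum.lof F D.G (fun d => D.comp d) d ⟨a, ha⟩ := by
    rw [LinearEquiv.symm_apply_eq, LinearEquiv.ofBijective_apply, DirectSum.lof_eq_of,
      DirectSum.coeLinearMap_of]
  rw [lift, LinearMap.comp_apply, LinearEquiv.coe_coe, h, DirectSum.toModule_lof]

lemma map_mul_of_forall_mem_comp {B : Type*} [NonUnitalNonAssocSemiring B] [Module F B]
    [SMulCommClass F B B] [IsScalarTower F B B] (L : D.A →ₗ[F] B)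
    (h : ∀ d e a b, a ∈ D.comp d → b ∈ D.comp e → L (a * b) = L a * L b) (x y : D.A) :
    L (x * y) = L x * L y := by
  have hright : ∀ e b, b ∈ D.comp e → L ∘ₗ LinearMap.mulRight F b =
      LinearMap.mulRight F (L b) ∘ₗ L := fun e b hb =>
    D.linearMap_ext fun d a ha => h d e a b ha hb
  have hleft : L ∘ₗ LinearMap.mulLeft F x = LinearMap.mulLeft F (L x) ∘ₗ L :=
    D.linearMap_ext fun e b hb => LinearMap.congr_fun (hright e b hb) x
  exact LinearMap.congr_fun hleft y

lemma exists_mem_comp_ne_zero_s4 {x : D.A} (hx : x ≠ 0) : ∃ d, ∃ a ∈ D.comp d, a ≠ 0 := by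
  by_contra! h
  have hbot : (⊤ : Submodule F D.A) = ⊥ := by
    rw [← D.spans, iSup_eq_bot]
    exact fun d => (Submodule.eq_bot_iff _).mpr (h d)
  exact hx ((Submodule.eq_bot_iff _).mp hbot x trivial)

end GrAlg

lemma mem_grpAlg_comp {K : Type u} [Group K] {k : K} {x : MonoidAlgebra F K} :
    x ∈ (grpAlg F K).comp k ↔ ∃ c : F, x = single k c := by
  change x ∈ Submodule.span F {single k 1} ↔ _
  simp only [Submodule.mem_span_singleton, smul_single', mul_one, eq_comm]

namespace TGrAlgHom

variable {D : GrAlg F}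

lemma ext_of_forall_mem_comp {Y : GrAlg F} {f g : TGrAlgHom D Y}
    (h : ∀ d, ∀ a ∈ D.comp d, f.hom a = g.hom a) : f = g := by
  have hlin := D.linearMap_ext (L := (f.hom : D.A →ₗ[F] Y.A)) (L' := g.hom) h
  exact TGrAlgHom.ext (NonUnitalAlgHom.ext (LinearMap.congr_fun hlin))

lemma exists_eq_single_on_comp {K : Type u} [Group K] (α : TGrAlgHom D (grpAlg F K)) (d : D.G) :
    ∃ (k : K) (φ : D.comp d →ₗ[F] F),
      Function.Injective φ ∧ ∀ a : D.comp d, α.hom a = single k (φ a) := by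
  obtain ⟨k, hk⟩ : ∃ k : K, ∀ a ∈ D.comp d, α.hom a ∈ (grpAlg F K).comp k := α.graded d
  let φ : D.comp d →ₗ[F] F := Finsupp.lapply k ∘ₗ (coeffLinearEquiv F).toLinearMap ∘ₗ
    (α.hom : D.A →ₗ[F] (grpAlg F K).A) ∘ₗ (D.comp d).subtype
  have hφ : ∀ a : D.comp d, α.hom a = single k (φ a) := fun a => by
    obtain ⟨c, hc⟩ := mem_grpAlg_comp.mp (hk a a.2)
    change α.hom a = single k ((α.hom a).coeff k)
    rw [hc, coeff_single, Finsupp.single_eq_same]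
  exact ⟨k, φ, fun a b hab => Subtype.ext (α.injOn d a.2 b.2 (by rw [hφ, hφ, hab])), hφ⟩

lemma map_one_of_grpAlg (D : GrAlgOne F) {K : Type u} [Group K]
    (ψ : TGrAlgHom D.toGrAlg (grpAlg F K)) (hD : D.one ≠ 0) :
    ψ.hom D.one = (1 : MonoidAlgebra F K) := by
  obtain ⟨d, a, ha, ha0⟩ := D.exists_mem_comp_ne_zero_s4 hD
  obtain ⟨k, φ, hφ, hψ⟩ := ψ.exists_eq_single_on_comp d
  have hunit : IsUnit (M := MonoidAlgebra F K) (ψ.hom a) := by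
    rw [show a = (⟨a, ha⟩ : D.comp d) from rfl, hψ]
    refine isUnit_single k (IsUnit.mk0 _ fun h => ha0 ?_)
    exact congrArg Subtype.val (hφ (h.trans (map_zero φ).symm))
  have hfix : ψ.hom D.one * ψ.hom a = ψ.hom a := by
    rw [← map_mul, D.one_mul]
  exact (IsUnit.mul_eq_right (M := MonoidAlgebra F K) hunit).mp hfix

end TGrAlgHom

section Product

variable {K G : Type u} [Group K] [Group G]

noncomputable def twistedMap (χ : K →* Fˣ) (φ : K →* G) :
    MonoidAlgebra F K →ₐ[F] MonoidAlgebra F G :=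
  MonoidAlgebra.lift F (MonoidAlgebra F G) K
    { toFun k := single (φ k) (χ k : F)
      map_one' := by simp [one_def]
      map_mul' k l := by simp [single_mul_single] }

lemma twistedMap_single (χ : K →* Fˣ) (φ : K →* G) (k : K) (c : F) :
    twistedMap χ φ (single k c) = single (φ k) (χ k * c) := by
  rw [twistedMap, lift_single, MonoidHom.coe_mk, OneHom.coe_mk, smul_single', mul_comm]

noncomputable def grpAlgTwistedMap (χ : K →* Fˣ) (φ : K →* G) :
    TGrAlgOneHom (grpAlgOne F K) (grpAlgOne F G) where
  hom := (twistedMap χ φ).toNonUnitalAlgHom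
  graded k := ⟨φ k, fun a ha => by
    obtain ⟨c, rfl⟩ := mem_grpAlg_comp.mp ha
    exact mem_grpAlg_comp.mpr ⟨_, twistedMap_single χ φ k c⟩⟩
  injOn k := by
    change K at k
    rintro a ha b hb hab
    obtain ⟨c, rfl⟩ := mem_grpAlg_comp.mp ha
    obtain ⟨c', rfl⟩ := mem_grpAlg_comp.mp hb
    change twistedMap χ φ (single k c) = twistedMap χ φ (single k c') at hab
    rw [twistedMap_single, twistedMap_single] at hab
    rw [mul_left_cancel₀ (χ k).ne_zero (single_right_injective hab)]
  map_one := map_one (twistedMap χ φ)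

variable (F G) (H : Type u) [Group H]

noncomputable def grpAlgProj₁ : TGrAlgOneHom (grpAlgOne F (Fˣ × G × H)) (grpAlgOne F G) :=
  grpAlgTwistedMap (MonoidHom.fst _ _) ((MonoidHom.fst _ _).comp (MonoidHom.snd _ _))

noncomputable def grpAlgProj₂ : TGrAlgOneHom (grpAlgOne F (Fˣ × G × H)) (grpAlgOne F H) :=
  grpAlgTwistedMap 1 ((MonoidHom.snd _ _).comp (MonoidHom.snd _ _))

variable {F G H}

lemma grpAlgProj₁_single (k : Fˣ × G × H) (c : F) :
    (grpAlgProj₁ F G H).hom (single k c) = single k.2.1 (k.1 * c) :=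
  twistedMap_single _ _ k c

lemma grpAlgProj₂_single (k : Fˣ × G × H) (c : F) :
    (grpAlgProj₂ F G H).hom (single k c) = single k.2.2 c :=
  (twistedMap_single _ _ k c).trans (by rw [MonoidHom.one_apply, Units.val_one, one_mul]; rfl)

lemma eq_of_grpAlgProj_eq {x y : MonoidAlgebra F (Fˣ × G × H)} {k k' : Fˣ × G × H}
    (hx : x ∈ (grpAlg F (Fˣ × G × H)).comp k) (hy : y ∈ (grpAlg F (Fˣ × G × H)).comp k')
    (h₁ : (grpAlgProj₁ F G H).hom x = (grpAlgProj₁ F G H).hom y)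
    (h₂ : (grpAlgProj₂ F G H).hom x = (grpAlgProj₂ F G H).hom y) : x = y := by
  obtain ⟨c, rfl⟩ := mem_grpAlg_comp.mp hx
  obtain ⟨c', rfl⟩ := mem_grpAlg_comp.mp hy
  rw [grpAlgProj₁_single, grpAlgProj₁_single] at h₁
  rw [grpAlgProj₂_single, grpAlgProj₂_single] at h₂
  obtain ⟨hh, rfl⟩ | ⟨rfl, rfl⟩ := single_inj.mp h₂
  · rcases eq_or_ne c 0 with rfl | hc
    · simp only [single_zero]
    obtain ⟨hg, hkc⟩ | ⟨hkc, -⟩ := single_inj.mp h₁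
    · have hu : k.1 = k'.1 := Units.ext (mul_right_cancel₀ hc hkc)
      rw [Prod.ext hu (Prod.ext hg hh)]
    · exact absurd hkc (mul_ne_zero k.1.ne_zero hc)
  · simp only [single_zero]

section Lift

variable {D : GrAlg F} (α : TGrAlgHom D (grpAlg F G)) (β : TGrAlgHom D (grpAlg F H))

lemma exists_single_lift_on_comp (d : D.G) :
    ∃ (k : Fˣ × G × H) (μ : D.comp d →ₗ[F] F), ∀ a : D.comp d,
      (grpAlgProj₁ F G H).hom (single k (μ a)) = α.hom a ∧
        (grpAlgProj₂ F G H).hom (single k (μ a)) = β.hom a := by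
  obtain ⟨g, φ, hφ, hα⟩ := α.exists_eq_single_on_comp d
  obtain ⟨h, μ, hμ, hβ⟩ := β.exists_eq_single_on_comp d
  obtain ⟨r, hr⟩ := LinearMap.exists_unit_smul_eq_of_injective hφ hμ
  refine ⟨(r, g, h), μ, fun a => ⟨?_, ?_⟩⟩
  · rw [grpAlgProj₁_single, hα, hr, LinearMap.smul_apply, smul_eq_mul]
  · rw [grpAlgProj₂_single, hβ]

lemma exists_linearMap_lift : ∃ L : D.A →ₗ[F] MonoidAlgebra F (Fˣ × G × H), ∀ d, ∃ k,
    ∀ a ∈ D.comp d, L a ∈ (grpAlg F (Fˣ × G × H)).comp k ∧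
      (grpAlgProj₁ F G H).hom (L a) = α.hom a ∧ (grpAlgProj₂ F G H).hom (L a) = β.hom a := by
  choose k μ hkμ using exists_single_lift_on_comp α β
  refine ⟨D.lift fun d => lsingle (k d) ∘ₗ μ d, fun d => ⟨k d, fun a ha => ?_⟩⟩
  rw [D.lift_apply_of_mem _ ha]
  exact ⟨mem_grpAlg_comp.mpr ⟨_, rfl⟩, hkμ d ⟨a, ha⟩⟩

lemma TGrAlgHom.ext_of_grpAlgProj {ψ ψ' : TGrAlgHom D (grpAlg F (Fˣ × G × H))}
    (h₁ : (grpAlgProj₁ F G H).toTGrAlgHom.comp ψ = (grpAlgProj₁ F G H).toTGrAlgHom.comp ψ')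
    (h₂ : (grpAlgProj₂ F G H).toTGrAlgHom.comp ψ = (grpAlgProj₂ F G H).toTGrAlgHom.comp ψ') :
    ψ = ψ' :=
  TGrAlgHom.ext_of_forall_mem_comp fun d a ha => by
    obtain ⟨k, hk⟩ := ψ.graded d
    obtain ⟨k', hk'⟩ := ψ'.graded d
    exact eq_of_grpAlgProj_eq (hk a ha) (hk' a ha) (congrArg (fun f => f.hom a) h₁)
      (congrArg (fun f => f.hom a) h₂)

lemma exists_grpAlgProj_comp_eq : ∃ ψ : TGrAlgHom D (grpAlg F (Fˣ × G × H)),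
    (grpAlgProj₁ F G H).toTGrAlgHom.comp ψ = α ∧ (grpAlgProj₂ F G H).toTGrAlgHom.comp ψ = β := by
  obtain ⟨L, hL⟩ := exists_linearMap_lift α β
  have hmul := D.map_mul_of_forall_mem_comp L fun d e a b ha hb => by
    obtain ⟨k, hk⟩ := hL d
    obtain ⟨k', hk'⟩ := hL e
    obtain ⟨k'', hk''⟩ := hL (d * e)
    have hab := hk'' (a * b) (D.mul_mem ha hb)
    refine eq_of_grpAlgProj_eq hab.1 ((grpAlg F _).mul_mem (hk a ha).1 (hk' b hb).1) ?_ ?_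
    · rw [hab.2.1, map_mul, ← (hk a ha).2.1, ← (hk' b hb).2.1]
      exact (map_mul _ _ _).symm
    · rw [hab.2.2, map_mul, ← (hk a ha).2.2, ← (hk' b hb).2.2]
      exact (map_mul _ _ _).symm
  let ψ : TGrAlgHom D (grpAlg F (Fˣ × G × H)) :=
    { hom := { L with map_zero' := L.map_zero, map_mul' := hmul }
      graded := fun d => (hL d).imp fun k hk a ha => (hk a ha).1
      injOn := fun d a ha b hb hab => β.injOn d ha hb <| by
        obtain ⟨k, hk⟩ := hL d
        rw [← (hk a ha).2.2, ← (hk b hb).2.2]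
        exact congrArg _ hab }
  refine ⟨ψ, TGrAlgHom.ext_of_forall_mem_comp fun d a ha => ?_,
    TGrAlgHom.ext_of_forall_mem_comp fun d a ha => ?_⟩
  · obtain ⟨k, hk⟩ := hL d
    exact (hk a ha).2.1
  · obtain ⟨k, hk⟩ := hL d
    exact (hk a ha).2.2

theorem grpAlg_isProduct : ∃! ψ : TGrAlgHom D (grpAlg F (Fˣ × G × H)),
    (grpAlgProj₁ F G H).toTGrAlgHom.comp ψ = α ∧ (grpAlgProj₂ F G H).toTGrAlgHom.comp ψ = β := by
  obtain ⟨ψ, h₁, h₂⟩ := exists_grpAlgProj_comp_eq α β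
  exact ⟨ψ, ⟨h₁, h₂⟩, fun ψ' h' => TGrAlgHom.ext_of_grpAlgProj (h'.1.trans h₁.symm)
    (h'.2.trans h₂.symm)⟩

end Lift

theorem grpAlgOne_isProduct {D : GrAlgOne F} (α : TGrAlgOneHom D (grpAlgOne F G))
    (β : TGrAlgOneHom D (grpAlgOne F H)) : ∃! ψ : TGrAlgOneHom D (grpAlgOne F (Fˣ × G × H)),
      (grpAlgProj₁ F G H).comp ψ = α ∧ (grpAlgProj₂ F G H).comp ψ = β := by
  obtain ⟨ψ, h₁, h₂⟩ := exists_grpAlgProj_comp_eq α.toTGrAlgHom β.toTGrAlgHom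
  have hD : D.one ≠ 0 := fun h => one_ne_zero (α := MonoidAlgebra F G) <| by
    have h1 := α.map_one
    rw [h, map_zero] at h1
    exact h1.symm
  refine ⟨⟨ψ, ψ.map_one_of_grpAlg D hD⟩, ⟨TGrAlgOneHom.ext (congrArg (·.hom) h₁),
    TGrAlgOneHom.ext (congrArg (·.hom) h₂)⟩, fun ψ' h' => TGrAlgOneHom.ext ?_⟩
  exact congrArg (·.hom) (TGrAlgHom.ext_of_grpAlgProj
    ((congrArg (·.toTGrAlgHom) h'.1).trans h₁.symm)
    ((congrArg (·.toTGrAlgHom) h'.2).trans h₂.symm))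

end Product

/-- `F(F^× × G × H)`, with the projections `u_{(α,g,h)} ↦ α·u_g` and
`u_{(α,g,h)} ↦ u_h`, is the product of `FG` and `FH` (with their standard gradings) in
both categories `tilde{GrAlg_F}` and `tilde{GrAlg¹_F}`. -/
theorem group_algebra_product_tilde (F : Type u) [Field F]
    (G H : Type u) [Group G] [Group H] :
    (∃ (π₁ : TGrAlgHom (grpAlg F (Fˣ × G × H)) (grpAlg F G))
       (π₂ : TGrAlgHom (grpAlg F (Fˣ × G × H)) (grpAlg F H)),
      (∀ (α : Fˣ) (g : G) (h : H) (c : F),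
        π₁.hom (MonoidAlgebra.single (α, g, h) c) = MonoidAlgebra.single g ((α : F) * c)) ∧
      (∀ (α : Fˣ) (g : G) (h : H) (c : F),
        π₂.hom (MonoidAlgebra.single (α, g, h) c) = MonoidAlgebra.single h c) ∧
      ∀ (D : GrAlg F) (α : TGrAlgHom D (grpAlg F G)) (β : TGrAlgHom D (grpAlg F H)),
        ∃! ψ : TGrAlgHom D (grpAlg F (Fˣ × G × H)), π₁.comp ψ = α ∧ π₂.comp ψ = β)
    ∧
    (∃ (π₁ : TGrAlgOneHom (grpAlgOne F (Fˣ × G × H)) (grpAlgOne F G))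
       (π₂ : TGrAlgOneHom (grpAlgOne F (Fˣ × G × H)) (grpAlgOne F H)),
      (∀ (α : Fˣ) (g : G) (h : H) (c : F),
        π₁.hom (MonoidAlgebra.single (α, g, h) c) = MonoidAlgebra.single g ((α : F) * c)) ∧
      (∀ (α : Fˣ) (g : G) (h : H) (c : F),
        π₂.hom (MonoidAlgebra.single (α, g, h) c) = MonoidAlgebra.single h c) ∧
      ∀ (D : GrAlgOne F) (α : TGrAlgOneHom D (grpAlgOne F G))
        (β : TGrAlgOneHom D (grpAlgOne F H)),
        ∃! ψ : TGrAlgOneHom D (grpAlgOne F (Fˣ × G × H)),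
          π₁.comp ψ = α ∧ π₂.comp ψ = β) :=
  ⟨⟨(grpAlgProj₁ F G H).toTGrAlgHom, (grpAlgProj₂ F G H).toTGrAlgHom,
      fun a g h c => grpAlgProj₁_single (a, g, h) c,
      fun a g h c => grpAlgProj₂_single (a, g, h) c,
      fun _ α β => grpAlg_isProduct α β⟩,
    ⟨grpAlgProj₁ F G H, grpAlgProj₂ F G H,
      fun a g h c => grpAlgProj₁_single (a, g, h) c,
      fun a g h c => grpAlgProj₂_single (a, g, h) c,
      fun _ α β => grpAlgOne_isProduct α β⟩⟩
end

section
/- For every field F, the universal grading group functor R₁ : tilde{GrAlg¹_F} → Grp has no left adjoint. -/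
/-! A graded-injective homomorphism is injective on each homogeneous component, so only the
zero algebra maps to the zero algebra; and a unital homomorphism out of the zero algebra
forces `1 = 0` in its target. If `K ⊣ R₁`, the trivial homomorphism `1 → R₁ X` gives a
morphism `K 1 → X` for every `X`. With `X` the zero algebra, `K 1` is zero; with `X = F`,
this gives `1 = 0` in `F`. -/

set_option autoImplicit false

universe u

variable {F : Type u} [Field F]

/-- The defining relations of the universal group of a grading: the words
`[g][h][gh]⁻¹` for `g, h` in the support with `A^(g)·A^(h) ≠ 0`. -/
def GrAlg.univRels (X : GrAlg F) : Set (FreeGroup X.supp) :=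
  { w | ∃ (g h : X.supp) (hgh : g.1 * h.1 ∈ X.supp),
      (∃ a ∈ X.comp g.1, ∃ b ∈ X.comp h.1, a * b ≠ 0) ∧
      w = FreeGroup.of g * FreeGroup.of h *
          (FreeGroup.of (⟨g.1 * h.1, hgh⟩ : X.supp))⁻¹ }

/-- The universal group of a grading, presented as the quotient of the free group
on the support by the normal closure of the relations `[g][h][gh]⁻¹`. -/
def GrAlg.univGroup (X : GrAlg F) : Type u :=
  FreeGroup X.supp ⧸ Subgroup.normalClosure X.univRels

noncomputable instance (X : GrAlg F) : Group X.univGroup :=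
  inferInstanceAs (Group (FreeGroup X.supp ⧸ Subgroup.normalClosure X.univRels))
lemma GrAlg.eq_of_mem_comp (X : GrAlg F) {a : X.A} {g h : X.G} (ha : a ≠ 0)
    (h1 : a ∈ X.comp g) (h2 : a ∈ X.comp h) : g = h := by
  by_contra hne
  have hd : Disjoint (X.comp g) (X.comp h) :=
    (X.independent g).mono_right
      (le_iSup₂ (f := fun (j : X.G) (_ : j ≠ g) => X.comp j) h (Ne.symm hne))
  exact ha (Submodule.disjoint_def.mp hd a h1 h2)

namespace TGrAlgHom

variable {X Y : GrAlg F} (f : TGrAlgHom X Y)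

/-- The component of `Y` into which the component `X.comp s` is mapped. -/
noncomputable def targ (s : X.supp) : Y.G := (f.graded s.1).choose

lemma targ_spec (s : X.supp) : ∀ a ∈ X.comp s.1, f.hom a ∈ Y.comp (f.targ s) :=
  (f.graded s.1).choose_spec

lemma hom_ne_zero (s : X.supp) {a : X.A} (ha : a ∈ X.comp s.1) (hne : a ≠ 0) :
    f.hom a ≠ 0 := by
  intro h0
  exact hne (f.injOn s.1 ha (Submodule.zero_mem _) (by simpa using h0))

lemma targ_mem (s : X.supp) : f.targ s ∈ Y.supp := by
  obtain ⟨a, ha, hne⟩ := Submodule.exists_mem_ne_zero_of_ne_bot s.2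
  exact Submodule.ne_bot_iff _ |>.mpr ⟨f.hom a, f.targ_spec s a ha, f.hom_ne_zero s ha hne⟩

/-- The lift of the support map to the free group on the support. -/
noncomputable def univMapAux : FreeGroup X.supp →* Y.univGroup :=
  FreeGroup.lift fun s =>
    (QuotientGroup.mk (FreeGroup.of (⟨f.targ s, f.targ_mem s⟩ : Y.supp)) : Y.univGroup)

lemma univMapAux_rels : ∀ w ∈ X.univRels, f.univMapAux w = 1 := by
  rintro w ⟨g, h, hgh, ⟨a, ha, b, hb, hab⟩, rfl⟩
  have habmem : a * b ∈ X.comp (g.1 * h.1) := X.mul_mem ha hb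
  have hfa : f.hom a ∈ Y.comp (f.targ g) := f.targ_spec g a ha
  have hfb : f.hom b ∈ Y.comp (f.targ h) := f.targ_spec h b hb
  have hfab : f.hom (a * b) ∈ Y.comp (f.targ g * f.targ h) := by
    rw [map_mul]
    exact Y.mul_mem hfa hfb
  have hfabne : f.hom (a * b) ≠ 0 := f.hom_ne_zero ⟨g.1 * h.1, hgh⟩ habmem hab
  have key : f.targ ⟨g.1 * h.1, hgh⟩ = f.targ g * f.targ h :=
    Y.eq_of_mem_comp hfabne (f.targ_spec ⟨g.1 * h.1, hgh⟩ _ habmem) hfab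
  have hmem : f.targ g * f.targ h ∈ Y.supp := key ▸ f.targ_mem ⟨g.1 * h.1, hgh⟩
  have hrel : FreeGroup.of (⟨f.targ g, f.targ_mem g⟩ : Y.supp) *
      FreeGroup.of (⟨f.targ h, f.targ_mem h⟩ : Y.supp) *
      (FreeGroup.of (⟨f.targ g * f.targ h, hmem⟩ : Y.supp))⁻¹ ∈ Y.univRels := by
    refine ⟨⟨f.targ g, f.targ_mem g⟩, ⟨f.targ h, f.targ_mem h⟩, hmem,
      ⟨f.hom a, hfa, f.hom b, hfb, ?_⟩, rfl⟩
    rw [← map_mul]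
    exact hfabne
  have heq : (⟨f.targ ⟨g.1 * h.1, hgh⟩, f.targ_mem _⟩ : Y.supp) =
      (⟨f.targ g * f.targ h, hmem⟩ : Y.supp) := Subtype.ext key
  have e : ∀ x : X.supp, f.univMapAux (FreeGroup.of x) =
      (QuotientGroup.mk (FreeGroup.of (⟨f.targ x, f.targ_mem x⟩ : Y.supp)) : Y.univGroup) :=
    fun x => FreeGroup.lift_apply_of
  rw [map_mul, map_mul, map_inv, e, e, e, heq]
  exact (QuotientGroup.eq_one_iff _).mpr (Subgroup.subset_normalClosure hrel)

/-- The universal grading group functor `R` on morphisms. -/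
noncomputable def univMap : X.univGroup →* Y.univGroup :=
  QuotientGroup.lift _ f.univMapAux (by
    intro w hw
    have : Subgroup.normalClosure X.univRels ≤ f.univMapAux.ker :=
      Subgroup.normalClosure_le_normal fun w hw => f.univMapAux_rels w hw
    exact this hw)

end TGrAlgHom

/-- The universal grading group functor `R₁` on morphisms. -/
noncomputable def TGrAlgOneHom.univMap {X Y : GrAlgOne F} (f : TGrAlgOneHom X Y) :
    X.univGroup →* Y.univGroup :=
  f.toTGrAlgHom.univMap
section Statement

variable (F : Type u) [Field F]

/-- The data of a left adjoint to the universal grading group functor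
`R₁ : tilde{GrAlg¹_F} → Grp`: a functor `K` from groups to unital graded algebras
together with a bijection `Hom(K H, X) ≃ Hom(H, R₁ X)` natural in both variables. -/
structure LeftAdjointDataROne (F : Type u) [Field F] where
  K : ∀ (H : Type u) [Group H], GrAlgOne F
  Kmap : ∀ {H₁ H₂ : Type u} [Group H₁] [Group H₂], (H₁ →* H₂) → TGrAlgOneHom (K H₁) (K H₂)
  Kmap_id : ∀ (H : Type u) [Group H], Kmap (MonoidHom.id H) = TGrAlgOneHom.id (K H)
  Kmap_comp : ∀ {H₁ H₂ H₃ : Type u} [Group H₁] [Group H₂] [Group H₃]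
    (f : H₁ →* H₂) (g : H₂ →* H₃), Kmap (g.comp f) = (Kmap g).comp (Kmap f)
  θ : ∀ (H : Type u) [Group H] (X : GrAlgOne F), TGrAlgOneHom (K H) X ≃ (H →* X.univGroup)
  θ_nat_left : ∀ {H₁ H₂ : Type u} [Group H₁] [Group H₂] (f : H₁ →* H₂) (X : GrAlgOne F)
    (u : TGrAlgOneHom (K H₂) X), θ H₁ X (u.comp (Kmap f)) = (θ H₂ X u).comp f
  θ_nat_right : ∀ (H : Type u) [Group H] {X Y : GrAlgOne F} (v : TGrAlgOneHom X Y)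
    (u : TGrAlgOneHom (K H) X), θ H Y (v.comp u) = v.univMap.comp (θ H X u)

namespace GrAlgOne

variable {F}

def trivialGrading (A : Type u) [Ring A] [Algebra F A] : GrAlgOne F where
  A := A
  G := PUnit.{u+1}
  comp _ := ⊤
  mul_mem _ _ _ _ _ _ := trivial
  independent := iSupIndep_subsingleton _
  spans := iSup_const
  one := 1
  one_mul := _root_.one_mul
  mul_one := _root_.mul_one

instance (A : Type u) [Ring A] [Algebra F A] [Subsingleton A] :
    Subsingleton (trivialGrading A : GrAlgOne F).A :=
  ‹Subsingleton A›

end GrAlgOne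

namespace TGrAlgHom

variable {F} {X Y : GrAlg F}

theorem comp_eq_bot_of_subsingleton (f : TGrAlgHom X Y) [Subsingleton Y.A] (g : X.G) :
    X.comp g = ⊥ :=
  (Submodule.eq_bot_iff _).mpr fun _ ha =>
    f.injOn g ha (X.comp g).zero_mem (Subsingleton.elim _ _)

theorem subsingleton_domain (f : TGrAlgHom X Y) [Subsingleton Y.A] :
    Subsingleton X.A := by
  have htop : (⊤ : Submodule F X.A) = ⊥ := by
    rw [← X.spans, iSup_eq_bot]
    exact f.comp_eq_bot_of_subsingleton
  exact (Submodule.subsingleton_iff F).mp (subsingleton_iff_bot_eq_top.mp htop.symm)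

end TGrAlgHom

namespace TGrAlgOneHom

variable {F} {X Y : GrAlgOne F}

theorem one_eq_zero (f : TGrAlgOneHom X Y) [Subsingleton X.A] : Y.one = 0 := by
  rw [← f.map_one, Subsingleton.elim X.one 0, map_zero]

end TGrAlgOneHom

/-- The universal grading group functor `R₁ : tilde{GrAlg¹_F} → Grp` has no left
adjoint. -/
theorem no_left_adjoint_R1 (F : Type u) [Field F] : ¬ Nonempty (LeftAdjointDataROne F) := by
  rintro ⟨D⟩
  have : Subsingleton (D.K PUnit).A :=
    ((D.θ PUnit (GrAlgOne.trivialGrading PUnit)).symm 1).subsingleton_domain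
  exact one_ne_zero (α := F) ((D.θ PUnit (GrAlgOne.trivialGrading F)).symm 1).one_eq_zero

end Statement
end

section
/- Let F be a field, let G and H be groups, and let φ : FG → FH be a non-zero graded homomorphism between the group algebras with their standard gradings. Then φ(u_g) ≠ 0 for all g ∈ G (so φ is graded injective), and there exist a group homomorphism ψ : G → H and a group homomorphism α : G → F^× such that φ(u_g) = α(g)·u_{ψ(g)} for all g ∈ G. -/
set_option autoImplicit false

universe u

/-- The homogeneous component `F·u_g` of the standard grading of a group algebra. -/
noncomputable def stdComp (F : Type u) [Field F] {G : Type u} [Group G] (g : G) :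
    Submodule F (MonoidAlgebra F G) :=
  Submodule.span F {MonoidAlgebra.single g 1}

/-!
A graded map sends each `u_g` to a scalar multiple `a • u_h`. Since `u_{g₀} = u_{g₀ g⁻¹} u_g`, one
non-vanishing value `φ(u_{g₀})` forces all `φ(u_g)` to be non-zero, so each `φ(u_g)` is a monomial
`a • u_h` with `a ∈ Fˣ`. These monomials form a copy of `Fˣ × H` inside `FH`, and multiplicativity
of `φ` makes `g ↦ φ(u_g)` a group homomorphism `G → Fˣ × H`, whose two components are `α` and `ψ`.
-/

open Function MonoidAlgebra

theorem MonoidHom.exists_lift_of_injective {G M N : Type*} [Group G] [Group M] [Mul N]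
    (j : M →ₙ* N) (hj : Injective j) (f : G →ₙ* N) (hf : ∀ g, ∃ m, j m = f g) :
    ∃ f' : G →* M, ∀ g, j (f' g) = f g := by
  choose l hl using hf
  exact ⟨MonoidHom.mk' l fun a b => hj (by rw [map_mul, hl, hl, hl, map_mul]), hl⟩

theorem LinearMapClass.injOn_span_singleton {R M N Fn : Type*} [Ring R] [IsDomain R]
    [AddCommMonoid M] [AddCommGroup N] [Module R M] [Module R N] [Module.IsTorsionFree R N]
    [FunLike Fn M N] [LinearMapClass Fn R M N] (f : Fn) {v : M} (hv : f v ≠ 0) :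
    Set.InjOn f (R ∙ v) := by
  intro x hx y hy hxy
  obtain ⟨a, rfl⟩ := Submodule.mem_span_singleton.mp hx
  obtain ⟨b, rfl⟩ := Submodule.mem_span_singleton.mp hy
  simp only [map_smul] at hxy
  rw [smul_left_injective R hv hxy]

namespace MonoidAlgebra

variable {k G : Type*}

variable (k G) in
noncomputable def unitsSingleHom [Semiring k] [MulOneClass G] : kˣ × G →* MonoidAlgebra k G :=
  singleHom.comp ((Units.coeHom k).prodMap (MonoidHom.id G))

@[simp] theorem unitsSingleHom_apply [Semiring k] [MulOneClass G] (m : kˣ × G) :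
    unitsSingleHom k G m = single m.2 (m.1 : k) := rfl

theorem unitsSingleHom_injective [Semiring k] [Nontrivial k] [MulOneClass G] :
    Injective (unitsSingleHom k G) := by
  rintro ⟨a, g⟩ ⟨b, h⟩ hab
  rw [unitsSingleHom_apply, unitsSingleHom_apply, single_inj] at hab
  obtain ⟨hgh, hab⟩ | ⟨ha, -⟩ := hab
  · exact Prod.ext (Units.ext hab) hgh
  · exact absurd ha a.ne_zero

theorem exists_map_single_one_ne_zero [CommSemiring k] [Mul G] {A : Type*}
    [NonUnitalNonAssocSemiring A] [DistribMulAction k A] (φ : MonoidAlgebra k G →ₙₐ[k] A)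
    (hφ : ∃ x, φ x ≠ 0) : ∃ g, φ (single g 1) ≠ 0 := by
  by_contra! h
  obtain ⟨x, hx⟩ := hφ
  have hφ₀ : φ = 0 := nonUnitalAlgHom_ext k (by simpa using h)
  exact hx (by simp [hφ₀])

theorem map_single_one_ne_zero [Semiring k] [Group G] {N Fn : Type*} [MulZeroClass N]
    [FunLike Fn (MonoidAlgebra k G) N] [MulHomClass Fn (MonoidAlgebra k G) N] (f : Fn) {g₀ : G}
    (h₀ : f (single g₀ 1) ≠ 0) (g : G) : f (single g 1) ≠ 0 := by
  intro hg
  apply h₀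
  rw [← inv_mul_cancel_right g₀ g, ← mul_one (1 : k), ← single_mul_single, map_mul, hg, mul_zero]

end MonoidAlgebra

theorem mem_stdComp_iff {F G : Type u} [Field F] [Group G] {g : G} {x : MonoidAlgebra F G} :
    x ∈ stdComp F g ↔ ∃ a : F, single g a = x := by
  simp [stdComp, Submodule.mem_span_singleton]

theorem exists_unitsSingleHom_eq_of_mem_stdComp {F H : Type u} [Field F] [Group H] {h : H}
    {x : MonoidAlgebra F H} (hx : x ∈ stdComp F h) (hx₀ : x ≠ 0) :
    ∃ m : Fˣ × H, unitsSingleHom F H m = x := by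
  obtain ⟨a, rfl⟩ := mem_stdComp_iff.mp hx
  exact ⟨(Units.mk0 a (single_ne_zero.mp hx₀), h), rfl⟩

/-- Every non-zero graded homomorphism `φ : FG → FH` between group algebras (with their
standard gradings) satisfies `φ(u_g) ≠ 0` for all `g ∈ G` (hence is graded injective),
and is given by `φ(u_g) = α(g)·u_{ψ(g)}` for a group homomorphism `ψ : G → H` and a
group homomorphism `α : G → F^×`. -/
theorem nonzero_graded_hom_of_group_algebras (F : Type u) [Field F]
    (G H : Type u) [Group G] [Group H]
    (φ : MonoidAlgebra F G →ₙₐ[F] MonoidAlgebra F H)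
    (hgraded : ∀ g : G, ∃ h : H, ∀ a ∈ stdComp F g, φ a ∈ stdComp F h)
    (hnonzero : ∃ x : MonoidAlgebra F G, φ x ≠ 0) :
    (∀ g : G, φ (MonoidAlgebra.single g 1) ≠ 0) ∧
    (∀ g : G, Set.InjOn φ (stdComp F g)) ∧
    ∃ (ψ : G →* H) (α : G →* Fˣ), ∀ g : G,
      φ (MonoidAlgebra.single g 1) = (α g : F) • MonoidAlgebra.single (ψ g) 1 := by
  obtain ⟨g₀, hg₀⟩ := exists_map_single_one_ne_zero φ hnonzero
  have hne : ∀ g : G, φ (single g 1) ≠ 0 := map_single_one_ne_zero φ hg₀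
  have hmonomial (g : G) : ∃ m, unitsSingleHom F H m = φ (single g 1) := by
    obtain ⟨h, hh⟩ := hgraded g
    exact exists_unitsSingleHom_eq_of_mem_stdComp (hh _ (Submodule.mem_span_singleton_self _))
      (hne g)
  obtain ⟨χ, hχ⟩ := MonoidHom.exists_lift_of_injective (unitsSingleHom F H).toMulHom
    unitsSingleHom_injective (φ.toMulHom.comp (ofMagma F G)) hmonomial
  refine ⟨hne, fun g => LinearMapClass.injOn_span_singleton φ (hne g),
    (MonoidHom.snd _ _).comp χ, (MonoidHom.fst _ _).comp χ, fun g => ?_⟩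
  rw [smul_single', mul_one]
  exact (hχ g).symm
end
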